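/- Let a, \mu be nonnegative integers and b a positive integer. The coefficient of q^{\mu} in the formal power series W(q)^a e^{-\mu W(q)}/(1-W(q))^b equals the binomial coefficient C(b-2+\mu-a, b-2), with the convention that this binomial coefficient is 0 if \mu - a < 0 (more precisely, C(\alpha,\beta)=0 when \alpha<\beta and C(\alpha,\beta)=\alpha!/(\beta!(\alpha-\beta)!) when \alpha\geq\beta\geq 0). -/

import Mathlib

open PowerSeries Finset

/-- The tree function `W(q) = ∑_{n≥1} n^{n-1} q^n / n!`. -/
noncomputable def treeW (K : Type*) [Field K] : PowerSeries K :=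
  PowerSeries.mk fun n => if n = 0 then 0 else (n : K) ^ (n - 1) / (n.factorial : K)

/-- Formal exponential of a power series with zero constant term. -/
noncomputable def pexp {K : Type*} [Field K] (f : PowerSeries K) : PowerSeries K :=
  PowerSeries.mk fun n => ∑ k ∈ Finset.range (n + 1), PowerSeries.coeff n (f ^ k) / (k.factorial : K)

/-- Binomial coefficient with the paper's convention: `1` if `α = β`, `0` if `α < β`
or (`α > β` and `β < 0`), and the usual binomial coefficient when `α ≥ β ≥ 0`. -/
def bino (α β : ℤ) : ℚ :=
  if α = β then 1 else if α < β ∨ β < 0 then 0 else (α.toNat.choose β.toNat : ℚ)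

open scoped Polynomial

/-!
The tree function satisfies `W = q e^W`: by Abel's identity
`∑_{i+j=n} C(n,i) (i+1)^(i-1) (j+1)^j = (n+2)^n`, the series with coefficients
`(m+1)^(m-1)/m!` satisfies the same linear ODE `E' = W' E` as `e^W`, so both agree, and
`W = q E` coefficientwise. Consequently `W^a = q^a e^{aW}`, which reduces the claim to the
diagonal coefficients `c(m,b) = [q^m] e^{-mW} (1-W)^{-b}`. Differentiating the functional
equation gives `W' = e^W/(1-W)`, hence
`(m+1) c(m+1,b) = -(m+1) c(m,b+1) + b c(m,b+2)`, and this recursion is solved by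
`c(m,n+2) = C(n+m,n)` and `c(m,1) = [m = 0]`.
-/

section Abel

variable {R : Type*} [CommRing R]

theorem sum_range_alternating_choose_mul_pow_eq_zero {n j : ℕ} (h : j < n) (c : R) :
    ∑ k ∈ range (n + 1), (-1) ^ (n - k) * (n.choose k : R) * (c + k) ^ j = 0 := by
  have := congrFun (fwdDiff_iter_pow_eq_zero_of_lt (R := R) h) c
  rw [fwdDiff_iter_eq_sum_shift] at this
  simpa [zsmul_eq_mul] using this

-- Abel's polynomial `∑ C(n,i) x (x+i)^(i-1) (Y+j)^j` at `x = 1`, where the truncated `i - 1`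
-- at `i = 0` gives the correct term `1`.
variable (R) in
noncomputable def abelPoly (n : ℕ) : R[X] :=
  ∑ p ∈ antidiagonal n,
    Polynomial.C ((n.choose p.1 : R) * (p.1 + 1) ^ (p.1 - 1)) * (Polynomial.X + (p.2 : R[X])) ^ p.2

theorem derivative_abelPoly_succ (n : ℕ) :
    Polynomial.derivative (abelPoly R (n + 1)) =
      (n + 1 : R[X]) * (abelPoly R n).comp (Polynomial.X + 1) := by
  rw [abelPoly, abelPoly, Polynomial.sum_comp, Nat.sum_antidiagonal_succ', map_add, map_sum,
    Finset.mul_sum]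
  simp only [pow_zero, mul_one, Polynomial.derivative_C, zero_add]
  refine Finset.sum_congr rfl fun p hp => ?_
  rw [HasAntidiagonal.mem_antidiagonal] at hp
  have hchoose : ((n + 1).choose p.1 : R) * (p.2 + 1 : ℕ) = n.choose p.1 * (n + 1) := by
    have := Nat.choose_mul_succ_eq n p.1
    rw [show n + 1 - p.1 = p.2 + 1 by omega] at this
    exact_mod_cast congrArg (Nat.cast (R := R)) this.symm
  simp only [Polynomial.derivative_mul, Polynomial.derivative_C, zero_mul, zero_add,
    Polynomial.derivative_pow, Polynomial.derivative_add, Polynomial.derivative_X,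
    Polynomial.derivative_natCast, add_zero, mul_one, Polynomial.mul_comp, Polynomial.C_comp,
    Polynomial.pow_comp, Polynomial.add_comp, Polynomial.X_comp, Polynomial.natCast_comp,
    add_tsub_cancel_right]
  have hC : ((p.2 + 1 : ℕ) : R[X]) = Polynomial.C ((p.2 + 1 : ℕ) : R) := by simp
  rw [hC, ← mul_assoc, ← Polynomial.C_mul, mul_right_comm _ _ (((p.2 + 1 : ℕ) : R)), hchoose]
  simp only [Polynomial.C_mul, map_natCast, map_add, map_one]
  push_cast
  ring

theorem eval_abelPoly_succ (n : ℕ) :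
    (abelPoly R (n + 1)).eval (-(n + 2 : R)) = 0 := by
  -- At `Y = -(n+2)` the `k`-th term is `(-1)^(n+1-k) C(n+1,k) (k+1)^n`, so the sum is an
  -- `(n+1)`-st finite difference of a polynomial of degree `n`.
  rw [abelPoly, Polynomial.eval_finsetSum, Nat.sum_antidiagonal_eq_sum_range_succ_mk,
    ← sum_range_alternating_choose_mul_pow_eq_zero (R := R) (Nat.lt_succ_self n) 1]
  refine Finset.sum_congr rfl fun k hk => ?_
  rw [mem_range] at hk
  simp only [Polynomial.eval_mul, Polynomial.eval_C, Polynomial.eval_pow, Polynomial.eval_add,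
    Polynomial.eval_X, Polynomial.eval_natCast]
  have hbase : -((n : R) + 2) + ((n + 1 - k : ℕ) : R) = -(1 + k) := by
    rw [Nat.cast_sub (by omega)]; push_cast; ring
  have hpow : ((k : R) + 1) ^ (k - 1) * (k + 1) ^ (n + 1 - k) = (k + 1) ^ n := by
    rcases k with _ | k
    · simp
    · rw [← pow_add]; congr 1; omega
  rw [hbase, neg_pow, add_comm (1 : R), mul_mul_mul_comm, hpow]
  ring

theorem abelPoly_eq [IsAddTorsionFree R] (n : ℕ) :
    abelPoly R n = (Polynomial.X + (n + 1 : R[X])) ^ n := by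
  induction n with
  | zero => simp [abelPoly]
  | succ n ih =>
    set D := abelPoly R (n + 1) - (Polynomial.X + (n + 1 + 1 : R[X])) ^ (n + 1)
    have hD : Polynomial.derivative D = 0 := by
      simp only [D, Polynomial.derivative_sub, derivative_abelPoly_succ, ih,
        Polynomial.derivative_pow, Polynomial.derivative_X, Polynomial.derivative_natCast,
        Polynomial.derivative_one, Polynomial.pow_comp, Polynomial.add_comp, Polynomial.X_comp,
        Polynomial.natCast_comp, Polynomial.one_comp, add_tsub_cancel_right, add_zero, mul_one,
        Nat.cast_add, Nat.cast_one, map_add, map_natCast, map_one]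
      ring
    have hD0 : D.eval (-(n + 2 : R)) = 0 := by
      simp only [D, Polynomial.eval_sub, eval_abelPoly_succ, Polynomial.eval_pow,
        Polynomial.eval_add, Polynomial.eval_X, Polynomial.eval_natCast, Polynomial.eval_one]
      rw [show -((n : R) + 2) + (n + 1 + 1) = 0 by ring, zero_pow n.succ_ne_zero, sub_zero]
    rw [Polynomial.eq_C_of_derivative_eq_zero hD, Polynomial.eval_C] at hD0
    rw [Nat.cast_succ, ← sub_eq_zero]
    exact (Polynomial.eq_C_of_derivative_eq_zero hD).trans (by rw [hD0, map_zero])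

theorem abel_identity [IsAddTorsionFree R] (n : ℕ) :
    ∑ p ∈ antidiagonal n, (n.choose p.1 : R) * (p.1 + 1) ^ (p.1 - 1) * (p.2 + 1) ^ p.2
      = (n + 2) ^ n := by
  have h := congrArg (Polynomial.eval 1) (abelPoly_eq (R := R) n)
  simp only [abelPoly, Polynomial.eval_finsetSum, Polynomial.eval_mul, Polynomial.eval_C,
    Polynomial.eval_pow, Polynomial.eval_add, Polynomial.eval_X, Polynomial.eval_natCast,
    Polynomial.eval_one] at h
  exact (sum_congr rfl fun p _ => by ring).trans (h.trans (by ring))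

end Abel

section FormalExp

theorem coeff_pow_eq_zero_of_lt {R : Type*} [CommSemiring R] {f : R⟦X⟧}
    (hf : constantCoeff f = 0) {n k : ℕ} (h : n < k) :
    coeff n (f ^ k) = 0 :=
  X_pow_dvd_iff.mp (pow_dvd_pow_of_dvd (X_dvd_iff.mpr hf) k) n h

variable {K : Type*} [Field K] [CharZero K]

theorem pexp_eq_subst_exp {f : K⟦X⟧} (hf : constantCoeff f = 0) : pexp f = (exp K).subst f := by
  ext n
  rw [coeff_subst' (HasSubst.of_constantCoeff_zero' hf), pexp, coeff_mk,
    finsum_eq_finsetSum_of_support_subset (s := range (n + 1))]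
  · simp [div_eq_inv_mul]
  · intro d hd
    by_contra h
    simp only [coe_range, Set.mem_Iio, not_lt] at h
    exact hd (show coeff d (exp K) • coeff n (f ^ d) = 0 by
      rw [coeff_pow_eq_zero_of_lt hf (by omega), smul_zero])

theorem derivative_pexp {f : K⟦X⟧} (hf : constantCoeff f = 0) :
    d⁄dX K (pexp f) = d⁄dX K f * pexp f := by
  rw [pexp_eq_subst_exp hf, derivative_subst (HasSubst.of_constantCoeff_zero' hf),
    derivative_exp, mul_comm]

theorem constantCoeff_pexp (f : K⟦X⟧) : constantCoeff (pexp f) = 1 := by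
  rw [← coeff_zero_eq_constantCoeff_apply, pexp, coeff_mk]
  simp

theorem eq_zero_of_derivative_eq_mul {h u : K⟦X⟧} (h0 : constantCoeff h = 0)
    (hD : d⁄dX K h = u * h) : h = 0 := by
  ext n
  induction n using Nat.strong_induction_on with
  | _ n ih =>
    rcases n with _ | m
    · simpa using h0
    have hlow : ∀ p ∈ antidiagonal m, coeff p.1 u * coeff p.2 h = 0 := fun p hp => by
      rw [ih p.2 (by rw [HasAntidiagonal.mem_antidiagonal] at hp; omega), map_zero, mul_zero]
    have hcoeff := coeff_derivative h m
    rw [hD, coeff_mul, sum_eq_zero hlow] at hcoeff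
    simpa [Nat.cast_add_one_ne_zero] using hcoeff.symm

theorem pexp_add {f g : K⟦X⟧} (hf : constantCoeff f = 0) (hg : constantCoeff g = 0) :
    pexp (f + g) = pexp f * pexp g := by
  have hfg : constantCoeff (f + g) = 0 := by rw [map_add, hf, hg, add_zero]
  rw [← sub_eq_zero]
  refine eq_zero_of_derivative_eq_mul (u := d⁄dX K (f + g)) ?_ ?_
  · simp [constantCoeff_pexp]
  · rw [map_sub, Derivation.leibniz, derivative_pexp hfg, derivative_pexp hf, derivative_pexp hg,
      map_add, smul_eq_mul, smul_eq_mul]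
    ring

theorem pexp_zero : pexp (0 : K⟦X⟧) = 1 :=
  derivative.ext (by rw [derivative_pexp (map_zero _), map_zero, zero_mul, derivative_one])
    (by rw [constantCoeff_pexp, map_one])

theorem pexp_nsmul {f : K⟦X⟧} (hf : constantCoeff f = 0) (n : ℕ) :
    pexp (n • f) = pexp f ^ n := by
  induction n with
  | zero => rw [zero_smul, pexp_zero, pow_zero]
  | succ n ih =>
    rw [succ_nsmul, pexp_add (by rw [map_nsmul, hf, smul_zero]) hf, ih, pow_succ]

end FormalExp

section TreeFunction

variable {K : Type*} [Field K]

theorem constantCoeff_treeW : constantCoeff (treeW K) = 0 := by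
  rw [← coeff_zero_eq_constantCoeff_apply, treeW, coeff_mk, if_pos rfl]

theorem constantCoeff_smul_treeW (x : K) : constantCoeff (x • treeW K) = 0 := by
  rw [smul_eq_C_mul, map_mul, constantCoeff_treeW, mul_zero]

theorem constantCoeff_one_sub_treeW : constantCoeff (1 - treeW K) = 1 := by
  rw [map_sub, map_one, constantCoeff_treeW, sub_zero]

variable [CharZero K]

theorem coeff_derivative_treeW (m : ℕ) :
    coeff m (d⁄dX K (treeW K)) = ((m : K) + 1) ^ m / m.factorial := by
  rw [coeff_derivative, treeW, coeff_mk, if_neg m.succ_ne_zero, Nat.factorial_succ]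
  push_cast
  field_simp

theorem derivative_mk_eq_derivative_treeW_mul :
    d⁄dX K (mk fun m => ((m : K) + 1) ^ (m - 1) / m.factorial)
      = d⁄dX K (treeW K) * mk fun m => ((m : K) + 1) ^ (m - 1) / m.factorial := by
  ext m
  rw [coeff_derivative, coeff_mul, coeff_mk]
  simp only [coeff_mk, coeff_derivative_treeW]
  calc (((m + 1 : ℕ) : K) + 1) ^ (m + 1 - 1) / (m + 1).factorial * (m + 1)
      = (∑ p ∈ antidiagonal m,
          (m.choose p.1 : K) * (p.1 + 1) ^ (p.1 - 1) * (p.2 + 1) ^ p.2) / m.factorial := by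
        rw [abel_identity, Nat.add_sub_cancel, Nat.factorial_succ]
        push_cast
        field_simp
        ring
    _ = _ := by
      rw [sum_div, ← Nat.sum_antidiagonal_swap]
      refine sum_congr rfl fun ⟨i, j⟩ hij => ?_
      rw [HasAntidiagonal.mem_antidiagonal] at hij
      subst hij
      dsimp only [Prod.swap]
      have hfact : ((j + i).factorial : K) ≠ 0 := Nat.cast_ne_zero.mpr (Nat.factorial_ne_zero _)
      rw [add_comm i j, Nat.cast_add_choose]
      field_simp

theorem pexp_treeW : pexp (treeW K) = mk fun m => ((m : K) + 1) ^ (m - 1) / m.factorial := by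
  rw [← sub_eq_zero]
  refine eq_zero_of_derivative_eq_mul (u := d⁄dX K (treeW K)) ?_ ?_
  · rw [map_sub, constantCoeff_pexp, ← coeff_zero_eq_constantCoeff_apply, coeff_mk]
    simp
  · rw [map_sub, derivative_pexp constantCoeff_treeW, derivative_mk_eq_derivative_treeW_mul,
      mul_sub]

theorem treeW_eq_X_mul_pexp : treeW K = X * pexp (treeW K) := by
  ext n
  rcases n with _ | n
  · simp [constantCoeff_treeW]
  · rw [coeff_succ_X_mul, pexp_treeW, treeW, coeff_mk, coeff_mk, if_neg n.succ_ne_zero,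
      Nat.add_sub_cancel, Nat.factorial_succ]
    push_cast
    rcases n with _ | n
    · simp
    · rw [Nat.add_sub_cancel, pow_succ', mul_div_mul_left _ _ (Nat.cast_add_one_ne_zero _)]

theorem treeW_pow (a : ℕ) : treeW K ^ a = X ^ a * pexp ((a : K) • treeW K) := by
  rw [Nat.cast_smul_eq_nsmul, pexp_nsmul constantCoeff_treeW, ← mul_pow, ← treeW_eq_X_mul_pexp]

theorem derivative_treeW : d⁄dX K (treeW K) = pexp (treeW K) * (1 - treeW K)⁻¹ := by
  have h : d⁄dX K (treeW K) * (1 - treeW K) = pexp (treeW K) := by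
    have hD := congrArg (d⁄dX K) (treeW_eq_X_mul_pexp (K := K))
    rw [Derivation.leibniz, derivative_pexp constantCoeff_treeW, derivative_X, smul_eq_mul,
      smul_eq_mul, mul_one, mul_left_comm, ← treeW_eq_X_mul_pexp] at hD
    linear_combination hD
  rw [← h, mul_assoc, PowerSeries.mul_inv_cancel _ (by simp [constantCoeff_one_sub_treeW]),
    mul_one]

theorem derivative_inv_one_sub_treeW_pow (b : ℕ) :
    d⁄dX K ((1 - treeW K)⁻¹ ^ b) = b * (pexp (treeW K) * (1 - treeW K)⁻¹ ^ (b + 2)) := by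
  rw [derivative_pow, derivative_inv', map_sub, derivative_one, derivative_treeW]
  rcases b with _ | b
  · simp
  · rw [Nat.add_sub_cancel]
    ring

end TreeFunction

theorem succ_mul_choose_add_two (n m : ℕ) :
    (n + 2) * (n + m + 2).choose (n + 2)
      = (m + 1) * ((n + m + 1).choose n + (n + m + 1).choose (n + 1)) := by
  rw [← Nat.choose_succ_succ', mul_comm, Nat.choose_succ_right_eq, mul_comm]
  congr 1
  omega

section DiagonalCoefficients

noncomputable def diagCoeff (K : Type*) [Field K] (m b : ℕ) : K :=
  coeff m (pexp (-((m : K) • treeW K)) * (1 - treeW K)⁻¹ ^ b)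

variable {K : Type*} [Field K] [CharZero K]

theorem pexp_smul_treeW_mul_pexp (x : K) :
    pexp (x • treeW K) * pexp (treeW K) = pexp ((x + 1) • treeW K) := by
  rw [← pexp_add (constantCoeff_smul_treeW x) constantCoeff_treeW, add_smul, one_smul]

theorem derivative_pexp_smul_treeW_mul_pow (x : K) (b : ℕ) :
    d⁄dX K (pexp (x • treeW K) * (1 - treeW K)⁻¹ ^ b)
      = C x * (pexp ((x + 1) • treeW K) * (1 - treeW K)⁻¹ ^ (b + 1))
        + C (b : K) * (pexp ((x + 1) • treeW K) * (1 - treeW K)⁻¹ ^ (b + 2)) := by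
  rw [Derivation.leibniz, derivative_inv_one_sub_treeW_pow,
    derivative_pexp (constantCoeff_smul_treeW x), Derivation.map_smul, derivative_treeW,
    ← pexp_smul_treeW_mul_pexp, smul_eq_mul, smul_eq_mul, smul_eq_C_mul (_ * _), map_natCast]
  ring

theorem diagCoeff_zero (b : ℕ) : diagCoeff K 0 b = 1 := by
  rw [diagCoeff, coeff_zero_eq_constantCoeff_apply, map_mul, map_pow, constantCoeff_pexp,
    constantCoeff_inv, constantCoeff_one_sub_treeW]
  simp

theorem succ_mul_diagCoeff_succ (m b : ℕ) :
    (m + 1) * diagCoeff K (m + 1) b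
      = -(m + 1) * diagCoeff K m (b + 1) + b * diagCoeff K m (b + 2) := by
  have h := coeff_derivative (pexp (-(((m + 1 : ℕ) : K) • treeW K)) * (1 - treeW K)⁻¹ ^ b) m
  have hx : (-((m + 1 : ℕ) : K) + 1) • treeW K = -((m : K) • treeW K) := by
    rw [← neg_smul]; push_cast; ring_nf
  rw [← neg_smul, derivative_pexp_smul_treeW_mul_pow, hx, map_add, coeff_C_mul, coeff_C_mul,
    neg_smul] at h
  rw [diagCoeff, diagCoeff, diagCoeff, mul_comm, ← h]
  push_cast
  ring

theorem diagCoeff_add_two (m n : ℕ) : diagCoeff K m (n + 2) = (n + m).choose n := by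
  induction m generalizing n with
  | zero => rw [diagCoeff_zero, add_zero, Nat.choose_self, Nat.cast_one]
  | succ m ih =>
    have h := succ_mul_diagCoeff_succ (K := K) m (n + 2)
    rw [ih, ih] at h
    refine mul_left_cancel₀ (Nat.cast_add_one_ne_zero m) (h.trans ?_)
    have hchoose := congrArg (Nat.cast (R := K)) (succ_mul_choose_add_two n m)
    push_cast at hchoose ⊢
    rw [show n + (m + 1) = n + m + 1 by ring, show n + 1 + m = n + m + 1 by ring,
      show n + 2 + m = n + m + 2 by ring, hchoose]
    ring

theorem diagCoeff_one (m : ℕ) : diagCoeff K m 1 = if m = 0 then 1 else 0 := by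
  rcases m with _ | m
  · exact diagCoeff_zero 1
  · have h := succ_mul_diagCoeff_succ (K := K) m 1
    rw [show (1 + 1 : ℕ) = 0 + 2 from rfl, diagCoeff_add_two, diagCoeff_add_two,
      Nat.choose_zero_right, Nat.choose_one_right] at h
    push_cast at h
    rw [if_neg m.succ_ne_zero]
    refine mul_left_cancel₀ (Nat.cast_add_one_ne_zero m) (h.trans ?_)
    ring

end DiagonalCoefficients

theorem bino_eq_diagCoeff (m b : ℕ) (hb : 0 < b) :
    bino ((b : ℤ) - 2 + m) ((b : ℤ) - 2) = diagCoeff ℚ m b := by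
  obtain _ | _ | n := b
  · omega
  · rw [diagCoeff_one, show ((0 + 1 : ℕ) : ℤ) - 2 = -1 by norm_num, bino]
    split_ifs <;> first | rfl | omega
  · rw [diagCoeff_add_two, show ((n + 1 + 1 : ℕ) : ℤ) - 2 = n by push_cast; ring, bino]
    split_ifs with h₁ h₂
    · rw [show m = 0 by omega, add_zero, Nat.choose_self, Nat.cast_one]
    · omega
    · rw [show ((n : ℤ) + m).toNat = n + m by omega, Int.toNat_natCast]

theorem stmt5 (a μ : ℕ) (b : ℕ) (hb : 0 < b) :
    PowerSeries.coeff μ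
        ((treeW ℚ) ^ a * pexp (-((μ : ℚ) • treeW ℚ)) * ((1 - treeW ℚ)⁻¹) ^ b)
      = bino ((b : ℤ) - 2 + (μ : ℤ) - (a : ℤ)) ((b : ℤ) - 2) := by
  rw [treeW_pow, mul_assoc, mul_assoc, coeff_X_pow_mul']
  split_ifs with hle
  · obtain ⟨m, rfl⟩ := Nat.exists_eq_add_of_le hle
    have hexp : pexp ((a : ℚ) • treeW ℚ) * pexp (-(((a + m : ℕ) : ℚ) • treeW ℚ))
        = pexp (-((m : ℚ) • treeW ℚ)) := by
      rw [← pexp_add (constantCoeff_smul_treeW _)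
        (by rw [map_neg, constantCoeff_smul_treeW, neg_zero])]
      congr 1
      push_cast
      module
    rw [← mul_assoc, hexp, Nat.add_sub_cancel_left,
      show (b : ℤ) - 2 + ((a + m : ℕ) : ℤ) - a = (b : ℤ) - 2 + m by push_cast; ring,
      bino_eq_diagCoeff m b hb, diagCoeff]
  · rw [bino, if_neg (by omega), if_pos (Or.inl (by omega))]
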